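/- arXiv:2504.19367 — 10 statements merged into one kernel-verified Lean document; each statement's English description precedes it below -/
import Mathlib

section
/- The recursion defining the interrobang function is well-founded by height: for all rational x with 0 < x ≤ 1/2, the height of the fractional part of 1/x is strictly less than the height of x, where the height of a rational a/b in lowest terms is |a| + |b|. -/
/-- The height of a rational number `a/b` in lowest terms is `|a| + |b|`. -/
def qheight (q : ℚ) : ℕ := q.num.natAbs + q.den

theorem interrobang_recursion_wellFounded_low (x : ℚ) (hx : 0 < x) (hx2 : x ≤ 1/2) :
    qheight (Int.fract (1/x)) < qheight x := by
  have hnum : 0 < x.num := Rat.num_pos.mpr hx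
  -- 2 * num ≤ den
  have hle : (x.num : ℤ) * 2 ≤ (x.den : ℤ) := by
    have h := hx2
    rw [← Rat.num_div_den x, div_le_div_iff₀ (by exact_mod_cast x.pos) (by norm_num)] at h
    rw [one_mul] at h; exact_mod_cast h
  rw [one_div]
  -- numerator of the fractional part is < x.num
  have hnumlt : (Int.fract x⁻¹).num < x.num := Rat.fract_inv_num_lt_num_of_pos hx
  have hfrac_nonneg : (0:ℚ) ≤ Int.fract x⁻¹ := Int.fract_nonneg _
  have hnum_nonneg : 0 ≤ (Int.fract x⁻¹).num := Rat.num_nonneg.mpr hfrac_nonneg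
  -- denominator of the fractional part divides x.num
  have hdvd : ((Int.fract x⁻¹).den : ℤ) ∣ x.num := by
    have h1 : (Int.fract x⁻¹).den ∣ x⁻¹.den * ((-⌊x⁻¹⌋ : ℤ) : ℚ).den := by
      have : Int.fract x⁻¹ = x⁻¹ + ((-⌊x⁻¹⌋ : ℤ) : ℚ) := by
        rw [Int.fract]; push_cast; ring
      rw [this]; exact Rat.add_den_dvd _ _
    rw [Rat.den_intCast, mul_one] at h1
    have h2 : ((x⁻¹).den : ℤ) ∣ x.num := by
      have hinv : x⁻¹ = Rat.divInt (x.den : ℤ) x.num := by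
        rw [Rat.divInt_eq_div, eq_div_iff (by exact_mod_cast hnum.ne'), inv_mul_eq_div,
          div_eq_iff hx.ne']
        have hx0 : (x.den : ℚ) ≠ 0 := by exact_mod_cast x.pos.ne'
        push_cast
        rw [mul_comm]
        exact_mod_cast (div_mul_cancel₀ (x.num:ℚ) hx0 ▸ congrArg (· * (x.den:ℚ)) (Rat.num_div_den x))
      rw [hinv]
      exact Rat.den_dvd _ _
    exact dvd_trans (by exact_mod_cast h1) h2
  have hden_le : (Int.fract x⁻¹).den ≤ x.num.natAbs := by
    have := Int.le_of_dvd (by positivity) hdvd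
    omega
  have hna : (Int.fract x⁻¹).num.natAbs < x.num.natAbs := by omega
  have hab : x.num.natAbs * 2 ≤ x.den := by omega
  unfold qheight
  omega
end

section
/- For all rational x with 1/2 < x ≤ 1, the height of (1/x - 1) and the height of (1 - x) are both strictly less than the height of x, where the height of a rational a/b in lowest terms is |a| + |b|. -/
theorem qheight_neg (q : ℚ) : qheight (-q) = qheight q := by
  simp [qheight]

theorem qheight_inv (q : ℚ) : qheight q⁻¹ = qheight q := by
  rcases eq_or_ne q 0 with rfl | hq
  · simp
  · simp [qheight, Rat.num_inv, Rat.den_inv_of_ne_zero hq, Int.natAbs_mul,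
      Int.natAbs_sign_of_ne_zero (Rat.num_ne_zero.mpr hq), add_comm]

theorem Rat.sub_one_den (q : ℚ) : (q - 1).den = q.den := by
  simp

theorem Rat.sub_one_num (q : ℚ) : (q - 1).num = q.num - q.den := by
  have h : ((q - 1).num : ℚ) = q.num - q.den := by
    rw [← Rat.mul_den_eq_num, Rat.sub_one_den, sub_mul, Rat.mul_den_eq_num, one_mul]
  exact_mod_cast h

theorem Rat.den_lt_two_mul_num {q : ℚ} (hq : 1 / 2 < q) : (q.den : ℤ) < 2 * q.num := by
  have hden : (0 : ℚ) < q.den := by exact_mod_cast q.den_pos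
  rw [← Rat.num_div_den q, lt_div_iff₀ hden] at hq
  exact_mod_cast (by linarith : (q.den : ℚ) < 2 * q.num)

theorem qheight_sub_one_lt {q : ℚ} (hq : 1 / 2 < q) : qheight (q - 1) < qheight q := by
  have hnum := Rat.den_lt_two_mul_num hq
  have hden := q.den_pos
  simp only [qheight, Rat.sub_one_den, Rat.sub_one_num]
  omega

theorem interrobang_recursion_wellFounded_high (x : ℚ) (h1 : 1/2 < x) (h2 : x ≤ 1) :
    qheight (1/x - 1) < qheight x ∧ qheight (1 - x) < qheight x := by
  have hx : 0 < x := by linarith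
  have hinv : 1 / 2 < x⁻¹ := by
    rw [lt_inv_comm₀ (by norm_num) hx]
    linarith
  constructor
  · rw [one_div, ← qheight_inv x]
    exact qheight_sub_one_lt hinv
  · rw [← neg_sub, qheight_neg]
    exact qheight_sub_one_lt h1
end

section
/- There exists a unique function ‽ : [0,1] ∩ ℚ → ℝ satisfying ‽(0) = 0, ‽(x) = 4^{-⌊1/x⌋}(1 - 2‽({1/x})) for 0 < x ≤ 1/2, and ‽(x) = 3/8 - (3/4)‽(1/x - 1) - (1/2)‽(1 - x) for 1/2 < x ≤ 1. -/
/-!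
Every branch of the recursion strictly lowers the height `|a| + b` of `x = a / b`: the step
`x ↦ {1/x}` for `x < 1` replaces `a / b` by `(b mod a) / a`, the step `x ↦ 1/x - 1` by
`(b - a) / a`, and the step `x ↦ 1 - x` for `x > 1/2` by `(b - a) / b`. Hence the equations define
a function by well-founded recursion on the height, and any two solutions agree on `[0,1] ∩ ℚ`
by strong induction on the height.
-/

/-- The defining functional equations of the interrobang function on `[0,1] ∩ ℚ`. -/
def InterrobangEq (f : ℚ → ℝ) : Prop :=
  f 0 = 0 ∧
  (∀ x : ℚ, 0 < x → x ≤ 1/2 →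
    f x = (4 : ℝ) ^ (-⌊(1/x : ℚ)⌋) * (1 - 2 * f (Int.fract (1/x)))) ∧
  (∀ x : ℚ, 1/2 < x → x ≤ 1 →
    f x = 3/8 - 3/4 * f (1/x - 1) - 1/2 * f (1 - x))

namespace Rat

theorem sub_intCast_num (q : ℚ) (n : ℤ) : (q - n).num = q.num - n * q.den := by
  have h := mul_den_eq_num (q - n)
  rw [sub_intCast_den, sub_mul, mul_den_eq_num] at h
  exact_mod_cast h.symm

def height (q : ℚ) : ℕ := q.num.natAbs + q.den

theorem height_fract_inv_lt {x : ℚ} (hx0 : 0 < x) (hx1 : x < 1) :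
    height (Int.fract x⁻¹) < height x := by
  have hnum : (Int.fract x⁻¹).num < x.num := fract_inv_num_lt_num_of_pos hx0
  have hnum_nonneg : 0 ≤ (Int.fract x⁻¹).num := num_nonneg.mpr (Int.fract_nonneg _)
  have hden : (Int.fract x⁻¹).den = x.num.natAbs := by
    rw [den_intFract, den_inv_of_ne_zero hx0.ne']
  have hlt : x.num < x.den := num_lt_denom_iff.mpr hx1
  rw [height, height, hden]
  omega

theorem height_inv_sub_one_lt {x : ℚ} (hx0 : 0 < x) (hx2 : x < 2) :
    height (x⁻¹ - 1) < height x := by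
  have hpos : 0 < x.num := num_pos.mpr hx0
  have hlt : x.num < 2 * x.den := by
    have : (x.num : ℚ) < 2 * x.den := by
      rw [← mul_den_eq_num]; nlinarith [(Nat.cast_pos.mpr x.den_pos : (0 : ℚ) < x.den)]
    exact_mod_cast this
  have hsub : x⁻¹ - 1 = x⁻¹ - ((1 : ℤ) : ℚ) := by norm_num
  have hnum : (x⁻¹ - 1).num = x.den - x.num := by
    rw [hsub, sub_intCast_num, num_inv, den_inv_of_ne_zero hx0.ne', Int.sign_eq_one_of_pos hpos]
    omega
  have hden : (x⁻¹ - 1).den = x.num.natAbs := by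
    rw [hsub, sub_intCast_den, den_inv_of_ne_zero hx0.ne']
  rw [height, height, hnum, hden]
  omega

theorem height_one_sub_lt {x : ℚ} (hx : 1 / 2 < x) : height (1 - x) < height x := by
  have hlt : (x.den : ℤ) < 2 * x.num := by
    have : (x.den : ℚ) < 2 * x.num := by
      rw [← mul_den_eq_num]; nlinarith [(Nat.cast_pos.mpr x.den_pos : (0 : ℚ) < x.den)]
    exact_mod_cast this
  have hneg : 1 - x = -(x - ((1 : ℤ) : ℚ)) := by push_cast; ring
  have hnum : (1 - x).num = x.den - x.num := by
    rw [hneg, num_neg_eq_neg_num, sub_intCast_num]; ring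
  have hden : (1 - x).den = x.den := by
    rw [hneg, neg_den, sub_intCast_den]
  rw [height, height, hnum, hden]
  have := x.den_pos
  omega

end Rat

noncomputable def interrobang (x : ℚ) : ℝ :=
  if h₁ : 0 < x ∧ x ≤ 1/2 then
    (4 : ℝ) ^ (-⌊(1/x : ℚ)⌋) * (1 - 2 * interrobang (Int.fract (1/x)))
  else if h₂ : 1/2 < x ∧ x ≤ 1 then
    3/8 - 3/4 * interrobang (1/x - 1) - 1/2 * interrobang (1 - x)
  else 0
  termination_by x.height
  decreasing_by
  · rw [one_div]; exact Rat.height_fract_inv_lt h₁.1 (by linarith [h₁.2])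
  · rw [one_div]; exact Rat.height_inv_sub_one_lt (by linarith [h₂.1]) (by linarith [h₂.2])
  · exact Rat.height_one_sub_lt h₂.1

theorem interrobangEq_interrobang : InterrobangEq interrobang := by
  refine ⟨by rw [interrobang]; norm_num, fun x h₁ h₂ => ?_, fun x h₁ h₂ => ?_⟩
  · rw [interrobang, dif_pos ⟨h₁, h₂⟩]
  · rw [interrobang, dif_neg (by rintro ⟨-, h⟩; linarith), dif_pos ⟨h₁, h₂⟩]

theorem InterrobangEq.eqOn {f g : ℚ → ℝ} (hf : InterrobangEq f) (hg : InterrobangEq g) :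
    Set.EqOn f g (Set.Icc 0 1) := by
  obtain ⟨hf₀, hf₁, hf₂⟩ := hf
  obtain ⟨hg₀, hg₁, hg₂⟩ := hg
  intro x hx
  induction x using (measure Rat.height).wf.induction with
  | h x ih =>
    obtain ⟨hx0, hx1⟩ := hx
    rcases hx0.eq_or_lt with rfl | hpos
    · rw [hf₀, hg₀]
    rcases le_or_gt x (1/2) with hle | hgt
    · have hfract : Int.fract (1/x) ∈ Set.Icc (0 : ℚ) 1 :=
        ⟨Int.fract_nonneg _, (Int.fract_lt_one _).le⟩
      have hlt : (Int.fract (1/x)).height < x.height := by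
        rw [one_div]; exact Rat.height_fract_inv_lt hpos (by linarith)
      rw [hf₁ x hpos hle, hg₁ x hpos hle, ih _ hlt hfract]
    · have hinv : 1/x - 1 ∈ Set.Icc (0 : ℚ) 1 := by
        constructor
        · rw [sub_nonneg, le_div_iff₀ hpos, one_mul]; exact hx1
        · rw [sub_le_iff_le_add, div_le_iff₀ hpos]; linarith
      have hlt : (1/x - 1).height < x.height := by
        rw [one_div]; exact Rat.height_inv_sub_one_lt hpos (by linarith)
      rw [hf₂ x hgt hx1, hg₂ x hgt hx1, ih _ hlt hinv,
        ih _ (Rat.height_one_sub_lt hgt) ⟨by linarith, by linarith⟩]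

theorem interrobang_exists_unique :
    ∃ f : ℚ → ℝ, InterrobangEq f ∧
      ∀ g : ℚ → ℝ, InterrobangEq g → ∀ x ∈ Set.Icc (0:ℚ) 1, g x = f x :=
  ⟨interrobang, interrobangEq_interrobang, fun _ hg => hg.eqOn interrobangEq_interrobang⟩
end

section
/- For every positive integer n and every rational x with 1/(n+1) < x < 1/n, the interrobang function satisfies ‽(1/(n+1)) < ‽(x) < ‽(1/n). -/
theorem Rat.num_lt_num_of_lt_of_den_eq {p q : ℚ} (hpq : p < q) (hden : p.den = q.den) :
    p.num < q.num := by
  have : (p.num : ℚ) < q.num := by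
    rw [← p.mul_den_eq_num, ← q.mul_den_eq_num, hden]
    exact mul_lt_mul_of_pos_right hpq (mod_cast q.den_pos)
  exact_mod_cast this

theorem Rat.num_one_sub_lt {q : ℚ} (hq : 1 / 2 < q) : (1 - q).num < q.num :=
  Rat.num_lt_num_of_lt_of_den_eq (by linarith) (by simp)

theorem Int.fract_inv_of_half_lt {K : Type*} [Field K] [LinearOrder K] [IsStrictOrderedRing K]
    [FloorRing K] {x : K} (h : 1 / 2 < x) (h1 : x < 1) : Int.fract x⁻¹ = x⁻¹ - 1 := by
  have hx : 0 < x := by linarith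
  refine Int.fract_eq_iff.2 ⟨?_, ?_, 1, by ring⟩
  · rw [sub_nonneg, one_le_inv₀ hx]; exact h1.le
  · rw [sub_lt_iff_lt_add, inv_lt_comm₀ hx (by norm_num)]; linarith

namespace InterrobangEq

variable {f : ℚ → ℝ}

theorem map_one (hf : InterrobangEq f) : f 1 = 3 / 8 := by
  have h := hf.2.2 1 (by norm_num) le_rfl
  norm_num [hf.1] at h
  exact h

theorem map_of_le_half (hf : InterrobangEq f) {x : ℚ} (h0 : 0 < x) (h : x ≤ 1 / 2) :
    f x = (4 : ℝ) ^ (-⌊x⁻¹⌋) * (1 - 2 * f (Int.fract x⁻¹)) := by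
  simpa only [one_div] using hf.2.1 x h0 h

theorem map_of_half_lt (hf : InterrobangEq f) {x : ℚ} (h : 1 / 2 < x) (h1 : x < 1) :
    f x = 3 / 8 - 3 / 4 * f (Int.fract x⁻¹) - 1 / 2 * f (1 - x) := by
  rw [Int.fract_inv_of_half_lt h h1, ← one_div]
  exact hf.2.2 x h h1.le

theorem map_one_div_natCast (hf : InterrobangEq f) {m : ℕ} (hm : 2 ≤ m) :
    f (1 / m) = (4 : ℝ) ^ (-(m : ℤ)) := by
  have hm' : (2 : ℚ) ≤ m := by exact_mod_cast hm
  rw [hf.map_of_le_half (by positivity) (one_div_le_one_div_of_le two_pos hm'), one_div, inv_inv,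
    Int.floor_natCast, Int.fract_natCast, hf.1]
  ring

theorem bounds_of_pos_of_lt_one (hf : InterrobangEq f) (t : ℚ) (h0 : 0 < t) (h1 : t < 1) :
    0 < f t ∧ f t < 3 / 8 ∧ (f t ≤ 1 / 16 ↔ t ≤ 1 / 2) := by
  induction h : t.num.toNat using Nat.strong_induction_on generalizing t with
  | _ N ih =>
  have hnum : ∀ s : ℚ, 0 < s → s.num < t.num → s.num.toNat < N := by
    intro s hs hlt
    have := Rat.num_pos.2 hs
    omega
  have hnonneg : ∀ s : ℚ, 0 ≤ s → s < 1 → s.num < t.num → 0 ≤ f s ∧ f s < 3 / 8 := by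
    intro s hs0 hs1 hlt
    rcases hs0.eq_or_lt with rfl | hs0
    · simp [hf.1]
    · obtain ⟨hpos, hlt, -⟩ := ih _ (hnum s hs0 hlt) s hs0 hs1 rfl
      exact ⟨hpos.le, hlt⟩
  have hs := hnonneg (Int.fract t⁻¹) (Int.fract_nonneg _) (Int.fract_lt_one _)
    (Rat.fract_inv_num_lt_num_of_pos h0)
  rcases le_or_gt t (1 / 2) with ht | ht
  · have hk : 2 ≤ ⌊t⁻¹⌋ := Int.le_floor.2 <| by
      rw [Int.cast_two, le_inv_comm₀ two_pos h0]; linarith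
    have hpow : (4 : ℝ) ^ (-⌊t⁻¹⌋) ≤ 1 / 16 :=
      calc (4 : ℝ) ^ (-⌊t⁻¹⌋) ≤ 4 ^ (-2 : ℤ) := zpow_le_zpow_right₀ (by norm_num) (by omega)
        _ = 1 / 16 := by norm_num
    have hpos : (0 : ℝ) < 4 ^ (-⌊t⁻¹⌋) := by positivity
    rw [hf.map_of_le_half h0 ht]
    exact ⟨by nlinarith, by nlinarith, iff_of_true (by nlinarith) ht⟩
  · have hz0 : 0 < 1 - t := by linarith
    obtain ⟨hz_pos, -, hz_iff⟩ :=
      ih _ (hnum _ hz0 (Rat.num_one_sub_lt ht)) (1 - t) hz0 (by linarith) rfl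
    have hz_le := hz_iff.2 (by linarith)
    rw [hf.map_of_half_lt ht h1]
    exact ⟨by linarith, by linarith, iff_of_false (by linarith) (not_le.2 ht)⟩

theorem map_mem_Ioo_of_floor_inv_eq (hf : InterrobangEq f) {n : ℕ} (hn : 2 ≤ n) {x : ℚ}
    (hlo : (n : ℚ) < x⁻¹) (hhi : x⁻¹ < n + 1) :
    (4 : ℝ) ^ (-(n : ℤ)) / 4 < f x ∧ f x < 4 ^ (-(n : ℤ)) := by
  have hx0 : 0 < x := inv_pos.1 ((Nat.cast_nonneg n).trans_lt hlo)
  have hx : x ≤ 1 / 2 := by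
    rw [one_div, ← inv_le_inv₀ (by norm_num) hx0, inv_inv]
    exact le_trans (by exact_mod_cast hn) hlo.le
  have hfloor : ⌊x⁻¹⌋ = n := Int.floor_eq_iff.2 ⟨by exact_mod_cast hlo.le, by exact_mod_cast hhi⟩
  have hfract : 0 < Int.fract x⁻¹ := by
    rw [Int.fract_pos, hfloor]; exact_mod_cast hlo.ne'
  obtain ⟨hs0, hs1, -⟩ := hf.bounds_of_pos_of_lt_one _ hfract (Int.fract_lt_one _)
  have hpos : (0 : ℝ) < 4 ^ (-(n : ℤ)) := by positivity
  rw [hf.map_of_le_half hx0 hx, hfloor]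
  constructor <;> nlinarith

end InterrobangEq

theorem interrobang_bounds (f : ℚ → ℝ) (hf : InterrobangEq f) :
    ∀ n : ℕ, 1 ≤ n → ∀ x : ℚ, 1/((n : ℚ)+1) < x → x < 1/(n : ℚ) →
      f (1/((n : ℚ)+1)) < f x ∧ f x < f (1/(n : ℚ)) := by
  intro n hn x hx1 hx2
  have hn0 : (0 : ℚ) < n := by exact_mod_cast hn
  have hx0 : 0 < x := (by positivity : (0 : ℚ) < 1 / (n + 1)).trans hx1
  have hlo : (n : ℚ) < x⁻¹ := by rwa [lt_inv_comm₀ hn0 hx0, ← one_div]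
  have hhi : x⁻¹ < n + 1 := by rwa [inv_lt_comm₀ hx0 (by positivity), ← one_div]
  have hsucc := hf.map_one_div_natCast (m := n + 1) (by omega)
  push_cast at hsucc
  rcases hn.eq_or_lt with rfl | hn2
  · obtain ⟨-, hlt, hiff⟩ := hf.bounds_of_pos_of_lt_one x hx0 (by simpa using hx2)
    have hx_half : ¬ x ≤ 1 / 2 := by norm_num at hx1; linarith
    rw [hsucc]
    norm_num [hf.map_one]
    exact ⟨not_le.1 (mt hiff.1 hx_half), hlt⟩
  · have hpow : (4 : ℝ) ^ (-((n : ℤ) + 1)) = 4 ^ (-(n : ℤ)) / 4 := by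
      rw [neg_add, zpow_add₀ four_ne_zero, zpow_neg_one, div_eq_mul_inv]
    rw [hsucc, hpow, hf.map_one_div_natCast hn2]
    exact hf.map_mem_Ioo_of_floor_inv_eq hn2 hlo hhi
end

section
/- For every rational x in [0,1], the value ‽(x) of the interrobang function is a dyadic rational number, i.e., a rational whose denominator in lowest terms is a power of 2. -/
/-!
Every step of the recursion defining `‽` is built from `+`, `-`, `*`, the dyadic constants
`3/8`, `3/4`, `1/2` and `4^(-m)`, so it suffices that the recursion terminates. For
`0 < x < 1` both `{1/x}` and `1/x - 1` have denominator `|num x| < den x`, while `1 - x` keeps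
the denominator but moves `x > 1/2` below `1/2`; hence strong induction on the denominator,
treating `x ≤ 1/2` before `x > 1/2`, reaches every rational in `[0,1]`.
-/

def dyadicRat : Subring ℚ where
  carrier := {q | ∃ k : ℕ, q.den ∣ 2 ^ k}
  zero_mem' := ⟨0, by simp⟩
  one_mem' := ⟨0, by simp⟩
  add_mem' := by
    rintro a b ⟨j, hj⟩ ⟨k, hk⟩
    exact ⟨j + k, (Rat.add_den_dvd a b).trans (pow_add 2 j k ▸ mul_dvd_mul hj hk)⟩
  mul_mem' := by
    rintro a b ⟨j, hj⟩ ⟨k, hk⟩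
    exact ⟨j + k, (Rat.mul_den_dvd a b).trans (pow_add 2 j k ▸ mul_dvd_mul hj hk)⟩
  neg_mem' := by
    rintro a ⟨k, hk⟩
    exact ⟨k, by rwa [Rat.neg_den]⟩

noncomputable def dyadicReal : Subring ℝ := dyadicRat.map (Rat.castHom ℝ)

lemma inv_two_pow_mem_dyadicRat (n : ℕ) : ((2 : ℚ) ^ n)⁻¹ ∈ dyadicRat :=
  ⟨n, by rw [← Nat.cast_ofNat, ← Nat.cast_pow, Rat.inv_natCast_den_of_pos (by positivity)]⟩

lemma intCast_div_two_pow_mem_dyadicReal (a : ℤ) (n : ℕ) : (a : ℝ) / 2 ^ n ∈ dyadicReal :=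
  ⟨a * ((2 : ℚ) ^ n)⁻¹,
    dyadicRat.mul_mem (intCast_mem dyadicRat a) (inv_two_pow_mem_dyadicRat n),
    by simp [div_eq_mul_inv]⟩

lemma four_zpow_neg_natCast_mem_dyadicReal (m : ℕ) : (4 : ℝ) ^ (-(m : ℤ)) ∈ dyadicReal := by
  have h : (4 : ℝ) ^ (-(m : ℤ)) = ((1 : ℤ) : ℝ) / 2 ^ (2 * m) := by
    rw [zpow_neg, zpow_natCast, pow_mul]; norm_num
  exact h ▸ intCast_div_two_pow_mem_dyadicReal 1 (2 * m)

lemma Rat.den_inv_lt_den {x : ℚ} (hx0 : 0 < x) (hx1 : x < 1) : x⁻¹.den < x.den := by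
  have h := Rat.num_lt_denom_iff.mpr hx1
  have h0 := Rat.num_pos.mpr hx0
  rw [Rat.den_inv_of_ne_zero hx0.ne']
  omega

namespace InterrobangEq

variable {f : ℚ → ℝ}

lemma apply_mem_dyadicReal_of_le_half (hf : InterrobangEq f) {x : ℚ} (hx0 : 0 < x)
    (hx : x ≤ 1 / 2) (hfract : f (Int.fract (1 / x)) ∈ dyadicReal) : f x ∈ dyadicReal := by
  obtain ⟨m, hm⟩ : ∃ m : ℕ, ⌊(1 / x : ℚ)⌋ = m :=
    Int.eq_ofNat_of_zero_le (Int.floor_nonneg.mpr (by positivity))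
  rw [hf.2.1 x hx0 hx, hm, two_mul]
  exact dyadicReal.mul_mem (four_zpow_neg_natCast_mem_dyadicReal m)
    (dyadicReal.sub_mem dyadicReal.one_mem (dyadicReal.add_mem hfract hfract))

lemma apply_mem_dyadicReal_of_half_lt (hf : InterrobangEq f) {x : ℚ} (hx : 1 / 2 < x)
    (hx1 : x ≤ 1) (hinv : f (1 / x - 1) ∈ dyadicReal) (hcompl : f (1 - x) ∈ dyadicReal) :
    f x ∈ dyadicReal := by
  have h38 : (3 / 8 : ℝ) ∈ dyadicReal := by
    convert intCast_div_two_pow_mem_dyadicReal 3 3 using 1; norm_num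
  have h34 : (3 / 4 : ℝ) ∈ dyadicReal := by
    convert intCast_div_two_pow_mem_dyadicReal 3 2 using 1; norm_num
  have h12 : (1 / 2 : ℝ) ∈ dyadicReal := by
    convert intCast_div_two_pow_mem_dyadicReal 1 1 using 1; norm_num
  rw [hf.2.2 x hx hx1]
  exact dyadicReal.sub_mem (dyadicReal.sub_mem h38 (dyadicReal.mul_mem h34 hinv))
    (dyadicReal.mul_mem h12 hcompl)

theorem apply_mem_dyadicReal (hf : InterrobangEq f) {x : ℚ} (hx0 : 0 ≤ x) (hx1 : x ≤ 1) :
    f x ∈ dyadicReal := by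
  induction hn : x.den using Nat.strong_induction_on generalizing x with
  | _ n ih =>
  have hlow : ∀ y : ℚ, 0 ≤ y → y ≤ 1 / 2 → y.den = n → f y ∈ dyadicReal := by
    intro y hy0 hy hyn
    rcases hy0.eq_or_lt with rfl | hy0
    · exact hf.1 ▸ dyadicReal.zero_mem
    refine hf.apply_mem_dyadicReal_of_le_half hy0 hy (ih _ ?_ (Int.fract_nonneg _)
      (Int.fract_lt_one _).le rfl)
    rw [Rat.den_intFract, one_div, ← hyn]
    exact Rat.den_inv_lt_den hy0 (by linarith)
  rcases le_or_gt x (1 / 2) with hx | hx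
  · exact hlow x hx0 hx hn
  rcases hx1.eq_or_lt with rfl | hx1'
  · refine hf.apply_mem_dyadicReal_of_half_lt hx le_rfl ?_ ?_ <;> simp [hf.1]
  have hx0' : 0 < x := by linarith
  refine hf.apply_mem_dyadicReal_of_half_lt hx hx1 (ih _ ?_ ?_ ?_ rfl)
    (hlow _ (by linarith) (by linarith) ?_)
  · rw [← hn, one_div, ← Int.cast_one, Rat.sub_intCast_den]
    exact Rat.den_inv_lt_den hx0' hx1'
  · rw [sub_nonneg, le_div_iff₀ hx0', one_mul]; exact hx1
  · rw [sub_le_iff_le_add, div_le_iff₀ hx0']; linarith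
  · rw [← hn, ← Int.cast_one, Rat.intCast_sub_den]

end InterrobangEq

theorem interrobang_rational_to_dyadic (f : ℚ → ℝ) (hf : InterrobangEq f) :
    ∀ x : ℚ, 0 ≤ x → x ≤ 1 → ∃ q : ℚ, f x = (q : ℝ) ∧ ∃ k : ℕ, q.den = 2^k := by
  intro x hx0 hx1
  obtain ⟨q, ⟨k, hk⟩, hq⟩ := hf.apply_mem_dyadicReal hx0 hx1
  obtain ⟨j, -, hj⟩ := (Nat.dvd_prime_pow Nat.prime_two).mp hk
  exact ⟨q, hq.symm, j, hj⟩
end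

section
/- Let a ≤ b be real numbers, T ⊆ ℝ, and f : T → ℝ. If f is monotone on [a,b] ∩ T and for every ε > 0 there exist points a = x₀ < x₁ < ⋯ < xₙ = b in T with |f(x_{i+1}) - f(x_i)| < ε for all i, then f is uniformly continuous on [a,b] ∩ T. -/
/-- `f` is `ε`-saturated on `[a, b]` (with respect to the domain `T`): there exist points
`a = x₀ < x₁ < ⋯ < xₙ = b` in `T` with `|f x_{i+1} - f x_i| < ε` for all `i < n`. -/
def Saturated (T : Set ℝ) (f : ℝ → ℝ) (ε a b : ℝ) : Prop :=
  ∃ (n : ℕ) (x : ℕ → ℝ), x 0 = a ∧ x n = b ∧ (∀ i ≤ n, x i ∈ T) ∧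
    (∀ i < n, x i < x (i + 1)) ∧ ∀ i < n, |f (x (i + 1)) - f (x i)| < ε

theorem uniformContinuousOn_of_saturated (T : Set ℝ) (f : ℝ → ℝ) (a b : ℝ) (hab : a ≤ b)
    (hmono : MonotoneOn f (Set.Icc a b ∩ T) ∨ AntitoneOn f (Set.Icc a b ∩ T))
    (hsat : ∀ ε > 0, Saturated T f ε a b) :
    UniformContinuousOn f (Set.Icc a b ∩ T) := by
  classical
  rw [Metric.uniformContinuousOn_iff]
  intro ε hε
  obtain ⟨n, p, hp0, hpn, hpT, hplt, hjump⟩ := hsat (ε / 2) (by linarith)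
  have hmonoP : ∀ j k, j ≤ k → k ≤ n → p j ≤ p k := by
    intro j k hjk hkn
    induction k with
    | zero =>
      interval_cases j; exact le_rfl
    | succ m ih =>
      rcases Nat.eq_or_lt_of_le hjk with h | h
      · rw [h]
      · exact le_trans (ih (Nat.lt_succ_iff.mp h) (le_trans (Nat.le_succ m) hkn))
          (le_of_lt (hplt m (Nat.lt_of_succ_le hkn)))
  have hpS : ∀ j ≤ n, p j ∈ Set.Icc a b ∩ T := fun j hj =>
    ⟨⟨hp0 ▸ hmonoP 0 j (Nat.zero_le j) hj, hpn ▸ hmonoP j n hj le_rfl⟩, hpT j hj⟩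
  rcases Nat.eq_zero_or_pos n with hn | hn
  · refine ⟨1, one_pos, fun u hu v hv _ => ?_⟩
    have hab' : a = b := by rw [← hp0, ← hpn, hn]
    have huv : u = v :=
      le_antisymm (le_trans hu.1.2 (hab' ▸ hv.1.1)) (le_trans hv.1.2 (hab' ▸ hu.1.1))
    simp [huv, hε]
  · have hne : (Finset.range n).Nonempty := Finset.nonempty_range_iff.mpr hn.ne'
    set δ := (Finset.range n).inf' hne (fun i => p (i + 1) - p i) with hδ
    have hδpos : 0 < δ := by
      rw [hδ, Finset.lt_inf'_iff]
      intro i hi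
      have := hplt i (Finset.mem_range.mp hi)
      linarith
    refine ⟨δ, hδpos, ?_⟩
    have key : ∀ u ∈ Set.Icc a b ∩ T, ∀ v ∈ Set.Icc a b ∩ T, u ≤ v → dist u v < δ →
        dist (f u) (f v) < ε := by
      intro u hu v hv huv hd
      set i := Nat.findGreatest (fun j => p j ≤ u) n with hi
      have hiP : p i ≤ u := Nat.findGreatest_spec (P := fun j => p j ≤ u) (Nat.zero_le n) (show p 0 ≤ u by rw [hp0]; exact hu.1.1)
      have hin : i ≤ n := Nat.findGreatest_le n
      set i2 := min (i + 2) n with hi2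
      have hi2n : i2 ≤ n := min_le_right _ _
      have hdvu : v - u < δ := by
        rw [Real.dist_eq, abs_sub_comm, abs_of_nonneg (by linarith)] at hd
        exact hd
      have hvle : v ≤ p i2 := by
        rcases le_or_gt n (i + 1) with h | h
        · have he : i2 = n := by omega
          rw [he, hpn]; exact hv.1.2
        · have he : i2 = i + 2 := by omega
          have h1 : u < p (i + 1) := by
            by_contra hc
            push_neg at hc
            exact Nat.findGreatest_is_greatest (by omega : i < i + 1) (by omega) hc
          have h2 : δ ≤ p (i + 2) - p (i + 1) :=
            Finset.inf'_le _ (Finset.mem_range.mpr (by omega))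
          rw [he]; linarith
      have hJ : |f (p i2) - f (p i)| < ε := by
        have hcase : i2 = i ∨ i2 = i + 1 ∨ i2 = i + 2 := by omega
        rcases hcase with h | h | h
        · rw [h]; simpa using hε
        · rw [h]
          have := hjump i (by omega)
          linarith
        · rw [h]
          have h1 := hjump i (by omega)
          have h2 := hjump (i + 1) (by omega)
          calc |f (p (i + 2)) - f (p i)|
              ≤ |f (p (i + 2)) - f (p (i + 1))| + |f (p (i + 1)) - f (p i)| :=
                abs_sub_le _ _ _
            _ < ε := by linarith
      rw [abs_lt] at hJ
      rcases hmono with hm | hm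
      · have h1 : f (p i) ≤ f u := hm (hpS i hin) hu hiP
        have h2 : f u ≤ f v := hm hu hv huv
        have h3 : f v ≤ f (p i2) := hm hv (hpS i2 hi2n) hvle
        rw [Real.dist_eq, abs_lt]
        constructor <;> linarith
      · have h1 : f u ≤ f (p i) := hm (hpS i hin) hu hiP
        have h2 : f v ≤ f u := hm hu hv huv
        have h3 : f (p i2) ≤ f v := hm hv (hpS i2 hi2n) hvle
        rw [Real.dist_eq, abs_lt]
        constructor <;> linarith
    intro u hu v hv hd
    rcases le_total u v with h | h
    · exact key u hu v hv h hd
    · rw [dist_comm] at hd ⊢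
      exact key v hv u hu h hd
end

section
/- Let a ≤ b be reals, T ⊆ ℝ, and f, g : T → ℝ each monotone (increasing or decreasing) on [a,b] ∩ T. If f is ε-saturated on [a,b] and g is ε'-saturated on [a,b], then f + g is (ε + ε')-saturated on [a,b]. -/
private lemma chain_mono {x : ℕ → ℝ} {m : ℕ} (h : ∀ i < m, x i < x (i+1)) :
    ∀ i j, i ≤ j → j ≤ m → x i ≤ x j := by
  intro i j hij hjm
  induction j with
  | zero =>
    have : i = 0 := Nat.le_zero.mp hij
    rw [this]
  | succ k ih =>
    rcases Nat.lt_or_ge i (k+1) with h1 | h1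
    · exact le_trans (ih (by omega) (by omega)) (le_of_lt (h k (by omega)))
    · have : i = k + 1 := by omega
      exact le_of_eq (by rw [this])

private lemma gap_lt {T : Set ℝ} {f : ℝ → ℝ} {a b ε : ℝ}
    (hmono : MonotoneOn f (Set.Icc a b ∩ T) ∨ AntitoneOn f (Set.Icc a b ∩ T))
    {m : ℕ} {x : ℕ → ℝ} (h0 : x 0 = a) (hm : x m = b)
    (hT : ∀ i ≤ m, x i ∈ T) (hlt : ∀ i < m, x i < x (i+1))
    (hε : ∀ i < m, |f (x (i+1)) - f (x i)| < ε)
    {u v : ℝ} (hu : u ∈ Set.Icc a b ∩ T) (hv : v ∈ Set.Icc a b ∩ T)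
    (huv : u < v) (hgap : ∀ j ≤ m, ¬ (u < x j ∧ x j < v)) :
    |f v - f u| < ε := by
  classical
  have hxmem : ∀ j ≤ m, x j ∈ Set.Icc a b ∩ T := fun j hj =>
    ⟨⟨h0 ▸ chain_mono hlt 0 j (Nat.zero_le j) hj, hm ▸ chain_mono hlt j m hj le_rfl⟩, hT j hj⟩
  set i := Nat.findGreatest (fun j => x j ≤ u) m with hi_def
  have hspec : x i ≤ u :=
    Nat.findGreatest_spec (P := fun j => x j ≤ u) (Nat.zero_le m)
      (show x 0 ≤ u by rw [h0]; exact hu.1.1)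
  have hi_le : i ≤ m := Nat.findGreatest_le m
  have hi_lt : i < m := by
    rcases lt_or_eq_of_le hi_le with h | h
    · exact h
    · exfalso
      have : x i = b := by rw [h, hm]
      have hub : u < b := lt_of_lt_of_le huv hv.1.2
      linarith [this ▸ hspec]
  have h1 : u < x (i+1) := by
    by_contra hcon
    push_neg at hcon
    exact Nat.findGreatest_is_greatest (Nat.lt_succ_self i) (by omega) hcon
  have h2 : v ≤ x (i+1) := le_of_not_gt fun hvlt => hgap (i+1) (by omega) ⟨h1, hvlt⟩
  have hxi := hxmem i (by omega)
  have hxi1 := hxmem (i+1) (by omega)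
  have hεi := hε i hi_lt
  rcases hmono with hm' | hm'
  · have A : f (x i) ≤ f u := hm' hxi hu hspec
    have B : f v ≤ f (x (i+1)) := hm' hv hxi1 h2
    have C : f u ≤ f v := hm' hu hv huv.le
    rw [abs_of_nonneg (by linarith)]
    calc f v - f u ≤ f (x (i+1)) - f (x i) := by linarith
      _ ≤ |f (x (i+1)) - f (x i)| := le_abs_self _
      _ < ε := hεi
  · have A : f u ≤ f (x i) := hm' hxi hu hspec
    have B : f (x (i+1)) ≤ f v := hm' hv hxi1 h2
    have C : f v ≤ f u := hm' hu hv huv.le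
    rw [abs_of_nonpos (by linarith)]
    calc -(f v - f u) = f u - f v := by ring
      _ ≤ f (x i) - f (x (i+1)) := by linarith
      _ ≤ |f (x (i+1)) - f (x i)| := by rw [abs_sub_comm]; exact le_abs_self _
      _ < ε := hεi

theorem saturated_add (T : Set ℝ) (f g : ℝ → ℝ) (a b : ℝ) (hab : a ≤ b)
    (hf : MonotoneOn f (Set.Icc a b ∩ T) ∨ AntitoneOn f (Set.Icc a b ∩ T))
    (hg : MonotoneOn g (Set.Icc a b ∩ T) ∨ AntitoneOn g (Set.Icc a b ∩ T))
    (ε ε' : ℝ) (hfs : Saturated T f ε a b) (hgs : Saturated T g ε' a b) :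
    Saturated T (f + g) (ε + ε') a b := by
  classical
  obtain ⟨n, x, hx0, hxn, hxT, hxlt, hxε⟩ := hfs
  obtain ⟨m, y, hy0, hym, hyT, hylt, hyε⟩ := hgs
  set S : Finset ℝ := (Finset.range (n+1)).image x ∪ (Finset.range (m+1)).image y with hS
  have hSsub : ∀ s ∈ S, s ∈ Set.Icc a b ∩ T := by
    intro s hs
    simp only [hS, Finset.mem_union, Finset.mem_image, Finset.mem_range] at hs
    rcases hs with ⟨j, hj, rfl⟩ | ⟨j, hj, rfl⟩
    · exact ⟨⟨hx0 ▸ chain_mono hxlt 0 j (Nat.zero_le j) (by omega),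
        hxn ▸ chain_mono hxlt j n (by omega) le_rfl⟩, hxT j (by omega)⟩
    · exact ⟨⟨hy0 ▸ chain_mono hylt 0 j (Nat.zero_le j) (by omega),
        hym ▸ chain_mono hylt j m (by omega) le_rfl⟩, hyT j (by omega)⟩
  have haS : a ∈ S := by
    simp only [hS, Finset.mem_union, Finset.mem_image, Finset.mem_range]
    exact Or.inl ⟨0, by omega, hx0⟩
  have hbS : b ∈ S := by
    simp only [hS, Finset.mem_union, Finset.mem_image, Finset.mem_range]
    exact Or.inl ⟨n, by omega, hxn⟩
  have hcard : 1 ≤ S.card := Finset.card_pos.mpr ⟨a, haS⟩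
  set N := S.card - 1 with hN
  let e : Fin S.card ↪o ℝ := S.orderEmbOfFin rfl
  set z : ℕ → ℝ := fun k => if h : k < S.card then e ⟨k, h⟩ else b with hz
  have hzS : ∀ k (h : k < S.card), z k ∈ S := by
    intro k h
    simp only [hz, dif_pos h]
    exact Finset.orderEmbOfFin_mem S rfl ⟨k, h⟩
  have hzlt : ∀ k l, k < l → (h : l < S.card) → z k < z l := by
    intro k l hkl h
    simp only [hz, dif_pos h, dif_pos (lt_trans hkl h)]
    exact e.strictMono (show (⟨k, _⟩ : Fin S.card) < ⟨l, h⟩ from hkl)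
  have hsurj : ∀ s ∈ S, ∃ j : Fin S.card, e j = s := by
    intro s hs
    have := Finset.range_orderEmbOfFin S rfl
    have : s ∈ Set.range e := by rw [this]; exact hs
    exact this
  have hz0 : z 0 = a := by
    obtain ⟨j, hj⟩ := hsurj a haS
    have h0 : (0 : ℕ) < S.card := hcard
    simp only [hz, dif_pos h0]
    have h1 : e ⟨0, h0⟩ ≤ e j := e.monotone (by rw [Fin.le_def]; exact Nat.zero_le _)
    have h2 : a ≤ e ⟨0, h0⟩ := (hSsub _ (Finset.orderEmbOfFin_mem S rfl ⟨0, h0⟩)).1.1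
    rw [hj] at h1
    linarith
  have hNlt : N < S.card := by omega
  have hzN : z N = b := by
    obtain ⟨j, hj⟩ := hsurj b hbS
    simp only [hz, dif_pos hNlt]
    have h1 : e j ≤ e ⟨N, hNlt⟩ := by
      apply e.monotone
      rw [Fin.le_def]
      have hjl := j.isLt
      show (j : ℕ) ≤ N
      omega
    have h2 : e ⟨N, hNlt⟩ ≤ b := (hSsub _ (Finset.orderEmbOfFin_mem S rfl ⟨N, hNlt⟩)).1.2
    rw [hj] at h1
    linarith
  have hconsec : ∀ k, k < N → ∀ s ∈ S, ¬ (z k < s ∧ s < z (k+1)) := by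
    intro k hk s hs ⟨h1, h2⟩
    obtain ⟨j, rfl⟩ := hsurj s hs
    have hk1 : k + 1 < S.card := by omega
    have hkc : k < S.card := by omega
    simp only [hz, dif_pos hk1, dif_pos hkc] at h1 h2
    have hkj : (⟨k, hkc⟩ : Fin S.card) < j := e.strictMono.lt_iff_lt.mp h1
    have : (⟨k+1, hk1⟩ : Fin S.card) ≤ j := by
      rw [Fin.le_def]; rw [Fin.lt_def] at hkj; simpa using hkj
    have := e.monotone this
    linarith
  refine ⟨N, z, hz0, hzN, ?_, ?_, ?_⟩
  · intro i hi
    exact (hSsub _ (hzS i (by omega))).2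
  · intro i hi
    exact hzlt i (i+1) (by omega) (by omega)
  · intro i hi
    have hu := hSsub _ (hzS i (by omega))
    have hv := hSsub _ (hzS (i+1) (by omega))
    have huv : z i < z (i+1) := hzlt i (i+1) (by omega) (by omega)
    have hF : |f (z (i+1)) - f (z i)| < ε := by
      refine gap_lt hf hx0 hxn hxT hxlt hxε hu hv huv ?_
      intro j hj
      refine hconsec i hi (x j) ?_
      simp only [hS, Finset.mem_union, Finset.mem_image, Finset.mem_range]
      exact Or.inl ⟨j, by omega, rfl⟩
    have hG : |g (z (i+1)) - g (z i)| < ε' := by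
      refine gap_lt hg hy0 hym hyT hylt hyε hu hv huv ?_
      intro j hj
      refine hconsec i hi (y j) ?_
      simp only [hS, Finset.mem_union, Finset.mem_image, Finset.mem_range]
      exact Or.inr ⟨j, by omega, rfl⟩
    have : (f + g) (z (i+1)) - (f + g) (z i) = (f (z (i+1)) - f (z i)) + (g (z (i+1)) - g (z i)) := by
      simp [Pi.add_apply]; ring
    rw [this]
    calc |(f (z (i+1)) - f (z i)) + (g (z (i+1)) - g (z i))|
        ≤ |f (z (i+1)) - f (z i)| + |g (z (i+1)) - g (z i)| := abs_add_le _ _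
      _ < ε + ε' := add_lt_add hF hG
end

section
/- Fix c ∈ ℂ with |c| > 1 and r = √(|c|² - 1), and let τ be the one-way reflection as above. Then τ is 1-Lipschitz on the unit circle: |τ(x) - τ(y)| ≤ |x - y| for all x, y with |x| = |y| = 1. -/
/-- The one-way reflection in the hyperbolic line `{z : |z - c| = r}` of the Poincaré disk,
where `r = √(|c|² - 1)`, extended to the boundary circle. -/
noncomputable def oneWayReflection (c : ℂ) (z : ℂ) : ℂ :=
  if Real.sqrt (‖c‖ ^ 2 - 1) < ‖z - c‖ then
    ((‖c‖ ^ 2 - 1 : ℝ) : ℂ) / (starRingEnd ℂ z - starRingEnd ℂ c) + c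
  else z

/-!
Outside the disc of radius `r` about `c` the map `τ` is the inversion in its boundary circle, and
inside it is the identity. The inversion multiplies the distance of two points `x, y` by
`r² / (|x - c| |y - c|)`, which is `< 1` when both lie outside the disc. If `x` is outside and `y`
inside, the image of `x` lies on the segment from `c` to `x` and is closer than `x` to every point
of the closed disc.
-/

namespace EuclideanGeometry

variable {V P : Type*} [NormedAddCommGroup V] [InnerProductSpace ℝ V] [MetricSpace P]
  [NormedAddTorsor V P]

noncomputable def oneWayInversion (c : P) (R : ℝ) (x : P) : P :=
  if R < dist x c then inversion c R x else x

theorem norm_div_norm_sq_smul_sub_le {R : ℝ} {a b : V} (ha : R < ‖a‖) (hb : ‖b‖ ≤ R) :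
    ‖(R / ‖a‖) ^ 2 • a - b‖ ≤ ‖a - b‖ := by
  have hR : 0 ≤ R := (norm_nonneg b).trans hb
  have ha0 : 0 < ‖a‖ := hR.trans_lt ha
  set t := (R / ‖a‖) ^ 2 with ht_def
  have ht : t * ‖a‖ ^ 2 = R ^ 2 := by rw [ht_def]; field_simp
  have ht1 : t ≤ 1 := by
    rw [ht_def, div_pow, div_le_one (by positivity)]
    exact pow_le_pow_left₀ hR ha.le 2
  have hinner : 2 * inner ℝ a b ≤ ‖a‖ ^ 2 + R ^ 2 := by
    nlinarith [real_inner_le_norm a b, mul_le_mul_of_nonneg_left hb ha0.le, sq_nonneg (‖a‖ - R)]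
  refine (pow_le_pow_iff_left₀ (norm_nonneg _) (norm_nonneg _) two_ne_zero).1 ?_
  rw [norm_sub_sq_real, norm_sub_sq_real, norm_smul, real_inner_smul_left, mul_pow,
    Real.norm_eq_abs, sq_abs]
  -- `t ‖a‖² = R²` makes the difference of the squared distances factor.
  have key : ‖a‖ ^ 2 - 2 * inner ℝ a b - (t ^ 2 * ‖a‖ ^ 2 - 2 * (t * inner ℝ a b))
      = (1 - t) * (‖a‖ ^ 2 + R ^ 2 - 2 * inner ℝ a b) := by
    rw [← ht]; ring
  nlinarith [mul_nonneg (sub_nonneg.2 ht1) (sub_nonneg.2 hinner)]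

variable {c x y : P} {R : ℝ}

theorem dist_inversion_le_of_lt_of_le (hx : R < dist x c) (hy : dist y c ≤ R) :
    dist (inversion c R x) y ≤ dist x y := by
  rw [dist_eq_norm_vsub V, dist_eq_norm_vsub V, ← vsub_sub_vsub_cancel_right _ y c,
    inversion_vsub_center, ← vsub_sub_vsub_cancel_right x y c, dist_eq_norm_vsub V x c]
  rw [dist_eq_norm_vsub V] at hx hy
  exact norm_div_norm_sq_smul_sub_le hx hy

theorem dist_inversion_inversion_le (hR : 0 ≤ R) (hx : R < dist x c) (hy : R < dist y c) :
    dist (inversion c R x) (inversion c R y) ≤ dist x y := by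
  have hxc : 0 < dist x c := hR.trans_lt hx
  have hyc : 0 < dist y c := hR.trans_lt hy
  rw [dist_inversion_inversion (dist_pos.1 hxc) (dist_pos.1 hyc)]
  refine mul_le_of_le_one_left dist_nonneg ((div_le_one (by positivity)).2 ?_)
  rw [sq]
  exact (mul_lt_mul'' hx hy hR hR).le

theorem lipschitzWith_oneWayInversion (c : P) (hR : 0 ≤ R) :
    LipschitzWith 1 (oneWayInversion c R) := by
  refine LipschitzWith.of_dist_le_mul fun x y => ?_
  rw [NNReal.coe_one, one_mul]
  unfold oneWayInversion
  split_ifs with hx hy hy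
  · exact dist_inversion_inversion_le hR hx hy
  · exact dist_inversion_le_of_lt_of_le hx (not_lt.1 hy)
  · rw [dist_comm, dist_comm x]
    exact dist_inversion_le_of_lt_of_le hy (not_lt.1 hx)
  · exact le_rfl

end EuclideanGeometry

open EuclideanGeometry ComplexConjugate

theorem Complex.ofReal_div_conj (K : ℝ) {w : ℂ} (hw : w ≠ 0) :
    (K : ℂ) / conj w = (K / ‖w‖ ^ 2) • w := by
  rw [div_eq_iff ((map_ne_zero _).2 hw), Complex.real_smul, mul_assoc, Complex.mul_conj,
    Complex.normSq_eq_norm_sq]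
  push_cast
  field_simp [hw]

theorem oneWayReflection_eq_oneWayInversion {c : ℂ} (hc : 1 ≤ ‖c‖) :
    oneWayReflection c = oneWayInversion c √(‖c‖ ^ 2 - 1) := by
  ext z
  rw [oneWayReflection, oneWayInversion, dist_eq_norm]
  split_ifs with hz
  · have hzc : z - c ≠ 0 := norm_pos_iff.1 ((Real.sqrt_nonneg _).trans_lt hz)
    rw [inversion, ← map_sub, Complex.ofReal_div_conj _ hzc, dist_eq_norm, div_pow,
      Real.sq_sqrt (by nlinarith), vsub_eq_sub, vadd_eq_add]
  · rfl

theorem oneWayReflection_lipschitz_general (c : ℂ) (hc : 1 < ‖c‖) (x y : ℂ) :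
    ‖oneWayReflection c x - oneWayReflection c y‖ ≤ ‖x - y‖ := by
  rw [oneWayReflection_eq_oneWayInversion hc.le, ← dist_eq_norm, ← dist_eq_norm]
  simpa using (lipschitzWith_oneWayInversion c (Real.sqrt_nonneg _)).dist_le_mul x y

theorem oneWayReflection_lipschitz (c : ℂ) (hc : 1 < ‖c‖) (x y : ℂ)
    (hx : ‖x‖ = 1) (hy : ‖y‖ = 1) :
    ‖oneWayReflection c x - oneWayReflection c y‖ ≤ ‖x - y‖ :=
  oneWayReflection_lipschitz_general c hc x y
end

section
/- Define the one-way reflections on ℝ by τ₁(x) = -1/2 - |x + 1/2|, τ₂(x) = 1/x if |x| > 1 and x otherwise, and τ₃(x) = |x|. Let μ' be the Borel probability measure on ℝ whose cumulative distribution function is F(x) given piecewise in terms of the interrobang function ‽: F(x) = ‽(-1/x) for x ≤ -2; 1/4 - ‽(-x-1)/2 for -2 ≤ x ≤ -1; 1/4 + ‽(-1 - 1/x)/2 + ‽(x+1)/2 for -1 ≤ x ≤ -1/2; 1/2 - ‽(-x)/2 for -1/2 ≤ x ≤ 0; 1/2 + ‽(x) for 0 ≤ x ≤ 1; 7/8 +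 ‽(x-1)/4 for 1 ≤ x ≤ 2; and 1 - ‽(1/x)/2 for x ≥ 2. Then for every rational x ∈ [-3,-2], one has (1/3)(μ'(τ₁^{-1}(-∞,x]) + μ'(τ₂^{-1}(-∞,x]) + μ'(τ₃^{-1}(-∞,x])) = F(x), that is, (1/3)(1 - F(-1-x) + F(x)) = F(x). -/
theorem stationarity_on_interval (I : ℝ → ℝ)
    (hI0 : I 0 = 0)
    (hIcont : ContinuousOn I (Set.Icc 0 1))
    (hImono : StrictMonoOn I (Set.Icc 0 1))
    (hIlow : ∀ x : ℝ, 0 < x → x ≤ 1/2 →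
      I x = (4 : ℝ) ^ (-⌊1/x⌋) * (1 - 2 * I (Int.fract (1/x))))
    (hIhigh : ∀ x : ℝ, 1/2 < x → x ≤ 1 →
      I x = 3/8 - 3/4 * I (1/x - 1) - 1/2 * I (1 - x))
    (F : ℝ → ℝ)
    (hF : ∀ x : ℝ, F x =
      if x ≤ -2 then I (-1/x)
      else if x ≤ -1 then 1/4 - I (-x - 1)/2
      else if x ≤ -1/2 then 1/4 + I (-1 - 1/x)/2 + I (x + 1)/2
      else if x ≤ 0 then 1/2 - I (-x)/2
      else if x ≤ 1 then 1/2 + I x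
      else if x ≤ 2 then 7/8 + I (x - 1)/4
      else 1 - I (1/x)/2) :
    ∀ x : ℚ, -3 ≤ x → x ≤ -2 →
      (1/3) * (1 - F (-1 - (x : ℝ)) + F (x : ℝ)) = F (x : ℝ) := by
  intro q hq1 hq2
  have h1 : (-3:ℝ) ≤ (q:ℝ) := by exact_mod_cast hq1
  have h2 : ((q:ℝ)) ≤ -2 := by exact_mod_cast hq2
  set x : ℝ := (q:ℝ) with hxdef
  have hI1 : I 1 = 3/8 := by
    have h := hIhigh 1 (by norm_num) le_rfl
    norm_num [hI0] at h
    linarith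
  rcases eq_or_lt_of_le h2 with h2e | h2l
  · -- x = -2
    have hIhalf : I (1/2) = 1/16 := by
      have h := hIlow (1/2) (by norm_num) le_rfl
      rw [show (1:ℝ)/(1/2) = 2 by norm_num] at h
      rw [show ⌊(2:ℝ)⌋ = 2 by norm_num] at h
      rw [show Int.fract (2:ℝ) = 0 by norm_num [Int.fract]] at h
      norm_num [hI0] at h
      exact h
    rw [h2e, hF, hF]
    norm_num [hI1, hIhalf]
  rcases eq_or_lt_of_le h1 with h1e | h1l
  · -- x = -3
    have hIthird : I (1/3) = 1/64 := by
      have h := hIlow (1/3) (by norm_num) (by norm_num)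
      rw [show (1:ℝ)/(1/3) = 3 by norm_num] at h
      rw [show ⌊(3:ℝ)⌋ = 3 by norm_num] at h
      rw [show Int.fract (3:ℝ) = 0 by norm_num [Int.fract]] at h
      norm_num [hI0] at h
      exact h
    rw [← h1e, hF, hF]
    norm_num [hI1, hIthird]
  -- -3 < x < -2
  have hxneg : x < 0 := by linarith
  have hfloor : ⌊-x⌋ = 2 := by
    rw [Int.floor_eq_iff]
    constructor <;> push_cast <;> linarith
  have h := hIlow (-1/x) (by rw [div_pos_iff]; right; constructor <;> linarith)
      (by rw [div_le_iff_of_neg hxneg]; linarith)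
  rw [show (1:ℝ)/(-1/x) = -x by field_simp] at h
  rw [hfloor] at h
  rw [show Int.fract (-x) = -x - 2 by rw [Int.fract, hfloor]; push_cast; ring] at h
  norm_num at h
  rw [hF, hF]
  split_ifs <;> try linarith
  rw [show (-1 - x - 1 : ℝ) = -x - 2 by ring]
  linarith
end

section
/- The function F : ℝ → ℝ defined piecewise by F(x) = ‽(-1/x) for x ≤ -2; 1/4 - ‽(-x-1)/2 for -2 ≤ x ≤ -1; 1/4 + ‽(-1 - 1/x)/2 + ‽(x+1)/2 for -1 ≤ x ≤ -1/2; 1/2 - ‽(-x)/2 for -1/2 ≤ x ≤ 0; 1/2 + ‽(x) for 0 ≤ x ≤ 1; 7/8 + ‽(x-1)/4 for 1 ≤ x ≤ 2; 1 - ‽(1/x)/2 for x ≥ 2, is well defined (the pieces agree at the boundary points -2, -1, -1/2, 0, 1, 2), continuous, strictly increasing, and satisfies lim_{x→-∞} F(x) = 0 and lim_{x→∞} F(x) = 1. -/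
/-!
Each of the seven pieces is a constant plus a positive multiple of `I ∘ φ`, with `φ` a
continuous increasing map of its interval into `[0, 1]`, or minus a positive multiple with `φ`
decreasing (the piece on `[-1, -1/2]` is a sum of two such terms). So every piece is continuous
and strictly increasing, and since consecutive pieces agree at the breakpoints (by `I 0 = 0`,
`I (1/2) = 1/16`, `I 1 = 3/8`, read off from the functional equations) they glue along closed
intervals. The limits come from `-1/x → 0⁺` and `1/x → 0⁺` and continuity of `I` at `0`.
-/

open Filter Set Topology

noncomputable def interrobangCdf (I : ℝ → ℝ) (x : ℝ) : ℝ :=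
  if x ≤ -2 then I (-1/x)
  else if x ≤ -1 then 1/4 - I (-x - 1)/2
  else if x ≤ -1/2 then 1/4 + I (-1 - 1/x)/2 + I (x + 1)/2
  else if x ≤ 0 then 1/2 - I (-x)/2
  else if x ≤ 1 then 1/2 + I x
  else if x ≤ 2 then 7/8 + I (x - 1)/4
  else 1 - I (1/x)/2

section Gluing

variable {α β : Type*} [LinearOrder α] {f : α → β} {a b : α}

theorem StrictMonoOn.Iic_union_Icc [Preorder β] (hab : a ≤ b) (h₁ : StrictMonoOn f (Iic a))
    (h₂ : StrictMonoOn f (Icc a b)) : StrictMonoOn f (Iic b) :=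
  Iic_union_Icc_eq_Iic hab ▸ h₁.union h₂ isGreatest_Iic (isLeast_Icc hab)

theorem StrictMonoOn.Icc_union_Ici [Preorder β] (hab : a ≤ b) (h₁ : StrictMonoOn f (Icc a b))
    (h₂ : StrictMonoOn f (Ici b)) : StrictMonoOn f (Ici a) :=
  Icc_union_Ici_eq_Ici hab ▸ h₁.union h₂ (isGreatest_Icc hab) isLeast_Ici

variable [TopologicalSpace α] [OrderClosedTopology α] [TopologicalSpace β]

theorem ContinuousOn.Iic_union_Icc (hab : a ≤ b) (h₁ : ContinuousOn f (Iic a))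
    (h₂ : ContinuousOn f (Icc a b)) : ContinuousOn f (Iic b) :=
  Iic_union_Icc_eq_Iic hab ▸ h₁.union_of_isClosed h₂ isClosed_Iic isClosed_Icc

theorem ContinuousOn.Icc_union_Ici (hab : a ≤ b) (h₁ : ContinuousOn f (Icc a b))
    (h₂ : ContinuousOn f (Ici b)) : ContinuousOn f (Ici a) :=
  Icc_union_Ici_eq_Ici hab ▸ h₁.union_of_isClosed h₂ isClosed_Icc isClosed_Ici

theorem ContinuousOn.Iic_union_Ici (h₁ : ContinuousOn f (Iic a)) (h₂ : ContinuousOn f (Ici a)) :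
    Continuous f := by
  simpa using h₁.union_of_isClosed h₂ isClosed_Iic isClosed_Ici

end Gluing

theorem mapsTo_one_div_Ici_one : MapsTo (fun x : ℝ => 1 / x) (Ici 1) (Icc 0 1) :=
  fun x (hx : 1 ≤ x) => ⟨by positivity, div_le_one_of_le₀ hx (by linarith)⟩

theorem mapsTo_neg_one_div_Iic_neg_one : MapsTo (fun x : ℝ => -1 / x) (Iic (-1)) (Icc 0 1) :=
  fun x (hx : x ≤ -1) => by
    simpa only [neg_div, div_neg, neg_neg] using mapsTo_one_div_Ici_one (show 1 ≤ -x by linarith)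

theorem mapsTo_neg_one_sub_one_div :
    MapsTo (fun x : ℝ => -1 - 1 / x) (Icc (-1) (-1/2)) (Icc 0 1) := by
  rintro x ⟨hx₁, hx₂⟩
  have hx : x < 0 := by linarith
  have h₁ : 1 / x ≤ -1 := by rw [div_le_iff_of_neg hx]; linarith
  have h₂ : -2 ≤ 1 / x := by rw [le_div_iff_of_neg hx]; linarith
  exact ⟨by linarith, by linarith⟩

namespace interrobangCdf

variable {I : ℝ → ℝ}

theorem eqOn_Iic_neg_two : EqOn (interrobangCdf I) (fun x => I (-1/x)) (Iic (-2)) :=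
  fun _ hx => if_pos hx

-- At the left endpoint of each of the following intervals the `if` selects the previous piece,
-- which agrees with the new one by the given values of `I`.
theorem eqOn_Icc_neg_two_neg_one (hI1 : I 1 = 3/8) (hI12 : I (1/2) = 1/16) :
    EqOn (interrobangCdf I) (fun x => 1/4 - I (-x - 1)/2) (Icc (-2) (-1)) := by
  rintro x ⟨hx₁, hx₂⟩
  rcases hx₁.eq_or_lt with rfl | hx₁
  · norm_num [interrobangCdf, hI1, hI12]
  · simp only [interrobangCdf]
    split_ifs <;> first | rfl | linarith

theorem eqOn_Icc_neg_one_neg_half (hI0 : I 0 = 0) :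
    EqOn (interrobangCdf I) (fun x => 1/4 + I (-1 - 1/x)/2 + I (x + 1)/2) (Icc (-1) (-1/2)) := by
  rintro x ⟨hx₁, hx₂⟩
  rcases hx₁.eq_or_lt with rfl | hx₁
  · norm_num [interrobangCdf, hI0]
  · simp only [interrobangCdf]
    split_ifs <;> first | rfl | linarith

theorem eqOn_Icc_neg_half_zero (hI1 : I 1 = 3/8) (hI12 : I (1/2) = 1/16) :
    EqOn (interrobangCdf I) (fun x => 1/2 - I (-x)/2) (Icc (-1/2) 0) := by
  rintro x ⟨hx₁, hx₂⟩
  rcases hx₁.eq_or_lt with rfl | hx₁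
  · norm_num [interrobangCdf, hI1, hI12]
  · simp only [interrobangCdf]
    split_ifs <;> first | rfl | linarith

theorem eqOn_Icc_zero_one (hI0 : I 0 = 0) :
    EqOn (interrobangCdf I) (fun x => 1/2 + I x) (Icc 0 1) := by
  rintro x ⟨hx₁, hx₂⟩
  rcases hx₁.eq_or_lt with rfl | hx₁
  · norm_num [interrobangCdf, hI0]
  · simp only [interrobangCdf]
    split_ifs <;> first | rfl | linarith

theorem eqOn_Icc_one_two (hI0 : I 0 = 0) (hI1 : I 1 = 3/8) :
    EqOn (interrobangCdf I) (fun x => 7/8 + I (x - 1)/4) (Icc 1 2) := by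
  rintro x ⟨hx₁, hx₂⟩
  rcases hx₁.eq_or_lt with rfl | hx₁
  · norm_num [interrobangCdf, hI0, hI1]
  · simp only [interrobangCdf]
    split_ifs <;> first | rfl | linarith

theorem eqOn_Ici_two (hI1 : I 1 = 3/8) (hI12 : I (1/2) = 1/16) :
    EqOn (interrobangCdf I) (fun x => 1 - I (1/x)/2) (Ici 2) := by
  rintro x (hx : 2 ≤ x)
  rcases hx.eq_or_lt with rfl | hx
  · norm_num [interrobangCdf, hI1, hI12]
  · simp only [interrobangCdf]
    split_ifs <;> first | rfl | linarith

theorem continuousOn_Iic_zero (hIcont : ContinuousOn I (Icc 0 1)) (hI0 : I 0 = 0)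
    (hI1 : I 1 = 3/8) (hI12 : I (1/2) = 1/16) : ContinuousOn (interrobangCdf I) (Iic 0) := by
  have c₁ : ContinuousOn (interrobangCdf I) (Iic (-2)) := by
    have hφ : MapsTo (fun x : ℝ => -1 / x) (Iic (-2)) (Icc 0 1) :=
      mapsTo_neg_one_div_Iic_neg_one.mono_left (Iic_subset_Iic.2 (by norm_num))
    refine ContinuousOn.congr (hIcont.comp ?_ hφ) eqOn_Iic_neg_two
    exact continuousOn_const.div continuousOn_id fun x (hx : x ≤ -2) => by linarith
  have c₂ : ContinuousOn (interrobangCdf I) (Icc (-2) (-1)) := by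
    have : MapsTo (fun x : ℝ => -x - 1) (Icc (-2) (-1)) (Icc 0 1) :=
      fun x ⟨h₁, h₂⟩ => ⟨by linarith, by linarith⟩
    exact ContinuousOn.congr (by fun_prop) (eqOn_Icc_neg_two_neg_one hI1 hI12)
  have c₃ : ContinuousOn (interrobangCdf I) (Icc (-1) (-1/2)) := by
    have : MapsTo (fun x : ℝ => x + 1) (Icc (-1) (-1/2)) (Icc 0 1) :=
      fun x ⟨h₁, h₂⟩ => ⟨by linarith, by linarith⟩
    have := mapsTo_neg_one_sub_one_div
    have : ContinuousOn (fun x : ℝ => -1 - 1 / x) (Icc (-1) (-1/2)) :=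
      continuousOn_const.sub <|
        continuousOn_const.div continuousOn_id fun x ⟨_, hx⟩ => by linarith
    exact ContinuousOn.congr (by fun_prop) (eqOn_Icc_neg_one_neg_half hI0)
  have c₄ : ContinuousOn (interrobangCdf I) (Icc (-1/2) 0) := by
    have : MapsTo (fun x : ℝ => -x) (Icc (-1/2) 0) (Icc 0 1) :=
      fun x ⟨h₁, h₂⟩ => ⟨by linarith, by linarith⟩
    exact ContinuousOn.congr (by fun_prop) (eqOn_Icc_neg_half_zero hI1 hI12)
  refine ((c₁.Iic_union_Icc ?_ c₂).Iic_union_Icc ?_ c₃).Iic_union_Icc ?_ c₄ <;> norm_num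

theorem continuousOn_Ici_zero (hIcont : ContinuousOn I (Icc 0 1)) (hI0 : I 0 = 0)
    (hI1 : I 1 = 3/8) (hI12 : I (1/2) = 1/16) : ContinuousOn (interrobangCdf I) (Ici 0) := by
  have c₅ : ContinuousOn (interrobangCdf I) (Icc 0 1) :=
    (continuousOn_const.add hIcont).congr (eqOn_Icc_zero_one hI0)
  have c₆ : ContinuousOn (interrobangCdf I) (Icc 1 2) := by
    have : MapsTo (fun x : ℝ => x - 1) (Icc 1 2) (Icc 0 1) :=
      fun x ⟨h₁, h₂⟩ => ⟨by linarith, by linarith⟩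
    exact ContinuousOn.congr (by fun_prop) (eqOn_Icc_one_two hI0 hI1)
  have c₇ : ContinuousOn (interrobangCdf I) (Ici 2) := by
    have : MapsTo (fun x : ℝ => 1 / x) (Ici 2) (Icc 0 1) :=
      mapsTo_one_div_Ici_one.mono_left (Ici_subset_Ici.2 (by norm_num))
    have : ContinuousOn (fun x : ℝ => 1 / x) (Ici 2) :=
      continuousOn_const.div continuousOn_id fun x (hx : 2 ≤ x) => by linarith
    exact ContinuousOn.congr (by fun_prop) (eqOn_Ici_two hI1 hI12)
  refine c₅.Icc_union_Ici ?_ (c₆.Icc_union_Ici ?_ c₇) <;> norm_num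

theorem strictMonoOn_Iic_zero (hImono : StrictMonoOn I (Icc 0 1)) (hI0 : I 0 = 0)
    (hI1 : I 1 = 3/8) (hI12 : I (1/2) = 1/16) : StrictMonoOn (interrobangCdf I) (Iic 0) := by
  have s₁ : StrictMonoOn (interrobangCdf I) (Iic (-2)) := by
    have hφ : MapsTo (fun x : ℝ => -1 / x) (Iic (-2)) (Icc 0 1) :=
      mapsTo_neg_one_div_Iic_neg_one.mono_left (Iic_subset_Iic.2 (by norm_num))
    intro x hx y (hy : y ≤ -2) hxy
    have := one_div_lt_one_div_of_neg_of_lt (by linarith) hxy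
    rw [eqOn_Iic_neg_two hx, eqOn_Iic_neg_two hy]
    exact hImono (hφ hx) (hφ hy) (by simp only [neg_div]; linarith)
  have s₂ : StrictMonoOn (interrobangCdf I) (Icc (-2) (-1)) := by
    rintro x ⟨hx₁, hx₂⟩ y ⟨hy₁, hy₂⟩ hxy
    have hF := eqOn_Icc_neg_two_neg_one hI1 hI12
    rw [hF ⟨hx₁, hx₂⟩, hF ⟨hy₁, hy₂⟩]
    linarith [hImono (a := -y - 1) (b := -x - 1) ⟨by linarith, by linarith⟩
      ⟨by linarith, by linarith⟩ (by linarith)]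
  have s₃ : StrictMonoOn (interrobangCdf I) (Icc (-1) (-1/2)) := by
    rintro x ⟨hx₁, hx₂⟩ y ⟨hy₁, hy₂⟩ hxy
    have hF := eqOn_Icc_neg_one_neg_half hI0
    rw [hF ⟨hx₁, hx₂⟩, hF ⟨hy₁, hy₂⟩]
    have := one_div_lt_one_div_of_neg_of_lt (by linarith) hxy
    have hφ := mapsTo_neg_one_sub_one_div
    linarith [hImono (hφ ⟨hx₁, hx₂⟩) (hφ ⟨hy₁, hy₂⟩) (by simp only; linarith),
      hImono (a := x + 1) (b := y + 1) ⟨by linarith, by linarith⟩ ⟨by linarith, by linarith⟩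
        (by linarith)]
  have s₄ : StrictMonoOn (interrobangCdf I) (Icc (-1/2) 0) := by
    rintro x ⟨hx₁, hx₂⟩ y ⟨hy₁, hy₂⟩ hxy
    have hF := eqOn_Icc_neg_half_zero hI1 hI12
    rw [hF ⟨hx₁, hx₂⟩, hF ⟨hy₁, hy₂⟩]
    linarith [hImono (a := -y) (b := -x) ⟨by linarith, by linarith⟩
      ⟨by linarith, by linarith⟩ (by linarith)]
  refine ((s₁.Iic_union_Icc ?_ s₂).Iic_union_Icc ?_ s₃).Iic_union_Icc ?_ s₄ <;>
    norm_num

theorem strictMonoOn_Ici_zero (hImono : StrictMonoOn I (Icc 0 1)) (hI0 : I 0 = 0)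
    (hI1 : I 1 = 3/8) (hI12 : I (1/2) = 1/16) : StrictMonoOn (interrobangCdf I) (Ici 0) := by
  have s₅ : StrictMonoOn (interrobangCdf I) (Icc 0 1) := by
    intro x hx y hy hxy
    rw [eqOn_Icc_zero_one hI0 hx, eqOn_Icc_zero_one hI0 hy]
    linarith [hImono hx hy hxy]
  have s₆ : StrictMonoOn (interrobangCdf I) (Icc 1 2) := by
    rintro x ⟨hx₁, hx₂⟩ y ⟨hy₁, hy₂⟩ hxy
    rw [eqOn_Icc_one_two hI0 hI1 ⟨hx₁, hx₂⟩, eqOn_Icc_one_two hI0 hI1 ⟨hy₁, hy₂⟩]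
    linarith [hImono (a := x - 1) (b := y - 1) ⟨by linarith, by linarith⟩
      ⟨by linarith, by linarith⟩ (by linarith)]
  have s₇ : StrictMonoOn (interrobangCdf I) (Ici 2) := by
    have hφ : MapsTo (fun x : ℝ => 1 / x) (Ici 2) (Icc 0 1) :=
      mapsTo_one_div_Ici_one.mono_left (Ici_subset_Ici.2 (by norm_num))
    intro x (hx : 2 ≤ x) y hy hxy
    rw [eqOn_Ici_two hI1 hI12 hx, eqOn_Ici_two hI1 hI12 hy]
    linarith [hImono (hφ hy) (hφ hx) (one_div_lt_one_div_of_lt (by linarith) hxy)]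
  refine s₅.Icc_union_Ici ?_ (s₆.Icc_union_Ici ?_ s₇) <;> norm_num

theorem tendsto_atBot (hIcont : ContinuousOn I (Icc 0 1)) (hI0 : I 0 = 0) :
    Tendsto (interrobangCdf I) atBot (𝓝 0) := by
  have hφ : Tendsto (fun x : ℝ => -1 / x) atBot (𝓝[Icc 0 1] 0) :=
    tendsto_nhdsWithin_iff.2 ⟨tendsto_const_nhds.div_atBot tendsto_id,
      (eventually_le_atBot (-1)).mono fun _ hx => mapsTo_neg_one_div_Iic_neg_one hx⟩
  have := (hIcont 0 (left_mem_Icc.2 zero_le_one)).tendsto.comp hφ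
  rw [hI0] at this
  exact this.congr' ((eventually_le_atBot (-2)).mono fun _ hx => (eqOn_Iic_neg_two hx).symm)

theorem tendsto_atTop (hIcont : ContinuousOn I (Icc 0 1)) (hI0 : I 0 = 0) (hI1 : I 1 = 3/8)
    (hI12 : I (1/2) = 1/16) : Tendsto (interrobangCdf I) atTop (𝓝 1) := by
  have hφ : Tendsto (fun x : ℝ => 1 / x) atTop (𝓝[Icc 0 1] 0) :=
    tendsto_nhdsWithin_iff.2 ⟨tendsto_const_nhds.div_atTop tendsto_id,
      (eventually_ge_atTop 1).mono fun _ hx => mapsTo_one_div_Ici_one hx⟩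
  have := (hIcont 0 (left_mem_Icc.2 zero_le_one)).tendsto.comp hφ
  rw [hI0] at this
  have := (tendsto_const_nhds (x := (1 : ℝ))).sub (this.div_const 2)
  rw [zero_div, sub_zero] at this
  exact this.congr' ((eventually_ge_atTop 2).mono fun _ hx => (eqOn_Ici_two hI1 hI12 hx).symm)

end interrobangCdf

theorem cdf_wellDefined_continuous_strictMono (I : ℝ → ℝ)
    (hI0 : I 0 = 0)
    (hIcont : ContinuousOn I (Set.Icc 0 1))
    (hImono : StrictMonoOn I (Set.Icc 0 1))
    (hIlow : ∀ x : ℝ, 0 < x → x ≤ 1/2 →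
      I x = (4 : ℝ) ^ (-⌊1/x⌋) * (1 - 2 * I (Int.fract (1/x))))
    (hIhigh : ∀ x : ℝ, 1/2 < x → x ≤ 1 →
      I x = 3/8 - 3/4 * I (1/x - 1) - 1/2 * I (1 - x))
    (F : ℝ → ℝ)
    (hF : ∀ x : ℝ, F x =
      if x ≤ -2 then I (-1/x)
      else if x ≤ -1 then 1/4 - I (-x - 1)/2
      else if x ≤ -1/2 then 1/4 + I (-1 - 1/x)/2 + I (x + 1)/2
      else if x ≤ 0 then 1/2 - I (-x)/2
      else if x ≤ 1 then 1/2 + I x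
      else if x ≤ 2 then 7/8 + I (x - 1)/4
      else 1 - I (1/x)/2) :
    -- the pieces agree at the boundary points -2, -1, -1/2, 0, 1, 2
    (I (1/2) = 1/4 - I 1 / 2) ∧
    (1/4 - I 0 / 2 = 1/4 + I 0 / 2 + I 0 / 2) ∧
    (1/4 + I 1 / 2 + I (1/2) / 2 = 1/2 - I (1/2) / 2) ∧
    (1/2 - I 0 / 2 = 1/2 + I 0) ∧
    (1/2 + I 1 = 7/8 + I 0 / 4) ∧
    (7/8 + I 1 / 4 = 1 - I (1/2) / 2) ∧
    Continuous F ∧ StrictMono F ∧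
    Tendsto F atBot (nhds 0) ∧ Tendsto F atTop (nhds 1) := by
  have hI1 : I 1 = 3/8 := by
    have := hIhigh 1 (by norm_num) le_rfl
    norm_num [hI0] at this
    linarith
  have hI12 : I (1/2) = 1/16 := by
    have := hIlow (1/2) (by norm_num) (by norm_num)
    norm_num [Int.fract, hI0] at this
    linarith
  obtain rfl : F = interrobangCdf I := funext hF
  refine ⟨?_, ?_, ?_, ?_, ?_, ?_,
    (interrobangCdf.continuousOn_Iic_zero hIcont hI0 hI1 hI12).Iic_union_Ici
      (interrobangCdf.continuousOn_Ici_zero hIcont hI0 hI1 hI12),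
    (interrobangCdf.strictMonoOn_Iic_zero hImono hI0 hI1 hI12).Iic_union_Ici
      (interrobangCdf.strictMonoOn_Ici_zero hImono hI0 hI1 hI12),
    interrobangCdf.tendsto_atBot hIcont hI0, interrobangCdf.tendsto_atTop hIcont hI0 hI1 hI12⟩ <;>
  norm_num [hI0, hI1, hI12]
end
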